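/- For all real numbers x, y with 0 ≤ x ≤ 1 and 0 ≤ y ≤ 1, and every positive real n, we have (1 - x*y)^n ≤ 1 - x + exp(-y*n). -/

import Mathlib

open Real

theorem Real.one_sub_rpow_le_exp_neg_mul {t n : ℝ} (ht : t ≤ 1) (hn : 0 ≤ n) :
    (1 - t) ^ n ≤ exp (-t * n) :=
  calc (1 - t) ^ n ≤ exp (-t) ^ n := rpow_le_rpow (sub_nonneg.2 ht) (one_sub_le_exp_neg t) hn
    _ = exp (-t * n) := (exp_mul _ _).symm

theorem Real.exp_mul_le_one_sub_add_mul_exp {a : ℝ} (ha0 : 0 ≤ a) (ha1 : a ≤ 1) (s : ℝ) :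
    exp (a * s) ≤ 1 - a + a * exp s := by
  have h := convexOn_exp.2 (Set.mem_univ 0) (Set.mem_univ s) (sub_nonneg.2 ha1) ha0 (by ring)
  simpa only [smul_eq_mul, mul_zero, zero_add, exp_zero, mul_one] using h

theorem stmt0_general (x y : ℝ) (hx0 : 0 ≤ x) (hx1 : x ≤ 1) (hy1 : y ≤ 1)
    (n : ℝ) (hn : 0 < n) :
    (1 - x * y) ^ n ≤ 1 - x + Real.exp (-y * n) := by
  have hxy : x * y ≤ 1 := (mul_le_of_le_one_right hx0 hy1).trans hx1
  calc (1 - x * y) ^ n ≤ exp (-(x * y) * n) := one_sub_rpow_le_exp_neg_mul hxy hn.le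
    _ = exp (x * (-y * n)) := by ring_nf
    _ ≤ 1 - x + x * exp (-y * n) := exp_mul_le_one_sub_add_mul_exp hx0 hx1 _
    _ ≤ 1 - x + exp (-y * n) := by
      gcongr
      exact mul_le_of_le_one_left (exp_pos _).le hx1

theorem stmt0 (x y : ℝ) (hx0 : 0 ≤ x) (hx1 : x ≤ 1) (hy0 : 0 ≤ y) (hy1 : y ≤ 1)
    (n : ℝ) (hn : 0 < n) :
    (1 - x * y) ^ n ≤ 1 - x + Real.exp (-y * n) :=
  stmt0_general x y hx0 hx1 hy1 n hn
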